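/- There is an absolute constant C > 0 such that for any three points x, y, z in the open unit disk 𝔻, | 𝔼[ 𝐆(x)·(𝐆(y) − 𝐆(z)) ] | ≤ d_H(y,z)/2 + C; equivalently, | log( |1 − x·conj(z)| / |1 − x·conj(y)| ) | ≤ d_H(y,z) + 2C. -/

import Mathlib

/-!
The identity `(1 - |y|²)(1 - x z̄) = (1 - x ȳ)(1 - y z̄) - (x - y)(z̄ - ȳ)`, together with
`|x - y| ≤ |1 - x ȳ|` and `|1 - z ȳ|² - |z - y|² = (1 - |y|²)(1 - |z|²)`, gives
`(1 - |T_y z|) |1 - x z̄| ≤ 2 |1 - x ȳ|`. Taking logarithms,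
`log (|1 - x z̄| / |1 - x ȳ|) ≤ log 2 - log (1 - |T_y z|) ≤ d_H(y, z) + log 2`,
and exchanging `y` and `z` bounds the absolute value; so `C = (log 2) / 2` works.
-/

noncomputable section

/-- The hyperbolic disk automorphism `T_y(z) = (z − y)/(1 − z ȳ)`. -/
def Tmap (y z : ℂ) : ℂ := (z - y) / (1 - z * (starRingEnd ℂ) y)

/-- The hyperbolic (Poincaré) metric on the unit disk. -/
def dH (y z : ℂ) : ℝ :=
  Real.log ((1 + ‖Tmap y z‖) / (1 - ‖Tmap y z‖))

/-- The covariance of the Gaussian field `𝐆`: `𝔼[𝐆(z)𝐆(y)] = −(1/2) log |1 − z ȳ|`. -/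
def Gcov (z y : ℂ) : ℝ := -Real.log (‖1 - z * (starRingEnd ℂ) y‖) / 2

open ComplexConjugate

theorem norm_one_sub_mul_conj_sq (a b : ℂ) :
    ‖1 - a * conj b‖ ^ 2 = ‖a - b‖ ^ 2 + (1 - ‖a‖ ^ 2) * (1 - ‖b‖ ^ 2) := by
  simp only [Complex.sq_norm, Complex.normSq_apply, Complex.sub_re, Complex.sub_im,
    Complex.mul_re, Complex.mul_im, Complex.one_re, Complex.one_im, Complex.conj_re,
    Complex.conj_im]
  ring

theorem norm_one_sub_mul_conj_comm (a b : ℂ) : ‖1 - a * conj b‖ = ‖1 - b * conj a‖ := by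
  rw [← Complex.norm_conj]
  simp [mul_comm]

theorem one_sub_norm_mul_norm_le (a b : ℂ) : 1 - ‖a‖ * ‖b‖ ≤ ‖1 - a * conj b‖ := by
  simpa [norm_mul] using norm_sub_norm_le (1 : ℂ) (a * conj b)

theorem norm_one_sub_mul_conj_pos {a b : ℂ} (ha : ‖a‖ < 1) (hb : ‖b‖ ≤ 1) :
    0 < ‖1 - a * conj b‖ := by
  have : ‖a‖ * ‖b‖ < 1 := by nlinarith [norm_nonneg a]
  linarith [one_sub_norm_mul_norm_le a b]

theorem norm_sub_le_norm_one_sub_mul_conj {a b : ℂ} (ha : ‖a‖ ≤ 1) (hb : ‖b‖ ≤ 1) :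
    ‖a - b‖ ≤ ‖1 - a * conj b‖ := by
  refine le_of_pow_le_pow_left₀ two_ne_zero (norm_nonneg _) ?_
  have : 0 ≤ (1 - ‖a‖ ^ 2) * (1 - ‖b‖ ^ 2) :=
    mul_nonneg (by nlinarith [norm_nonneg a]) (by nlinarith [norm_nonneg b])
  rw [norm_one_sub_mul_conj_sq]
  linarith

theorem norm_sub_lt_norm_one_sub_mul_conj {a b : ℂ} (ha : ‖a‖ < 1) (hb : ‖b‖ < 1) :
    ‖a - b‖ < ‖1 - a * conj b‖ := by
  refine lt_of_pow_lt_pow_left₀ 2 (norm_nonneg _) ?_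
  have : 0 < (1 - ‖a‖ ^ 2) * (1 - ‖b‖ ^ 2) :=
    mul_pos (by nlinarith [norm_nonneg a]) (by nlinarith [norm_nonneg b])
  rw [norm_one_sub_mul_conj_sq]
  linarith

theorem norm_Tmap (y z : ℂ) : ‖Tmap y z‖ = ‖z - y‖ / ‖1 - z * conj y‖ :=
  norm_div _ _

theorem norm_Tmap_comm (y z : ℂ) : ‖Tmap z y‖ = ‖Tmap y z‖ := by
  rw [norm_Tmap, norm_Tmap, norm_sub_rev, norm_one_sub_mul_conj_comm]

theorem norm_Tmap_lt_one {y z : ℂ} (hy : ‖y‖ < 1) (hz : ‖z‖ < 1) : ‖Tmap y z‖ < 1 := by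
  rw [norm_Tmap, div_lt_one (norm_one_sub_mul_conj_pos hz hy.le)]
  exact norm_sub_lt_norm_one_sub_mul_conj hz hy

theorem dH_comm (y z : ℂ) : dH z y = dH y z := by
  rw [dH, dH, norm_Tmap_comm]

theorem one_sub_norm_sq_mul_norm_one_sub_mul_conj_le {x y : ℂ} (hx : ‖x‖ ≤ 1) (hy : ‖y‖ ≤ 1)
    (z : ℂ) :
    (1 - ‖y‖ ^ 2) * ‖1 - x * conj z‖ ≤ ‖1 - x * conj y‖ * (‖1 - z * conj y‖ + ‖z - y‖) := by
  have hyy : ‖1 - y * conj y‖ = 1 - ‖y‖ ^ 2 := by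
    rw [Complex.mul_conj', ← Complex.ofReal_pow, ← Complex.ofReal_one, ← Complex.ofReal_sub,
      Complex.norm_real, Real.norm_of_nonneg (by nlinarith [norm_nonneg y])]
  have hxy : ‖x - y‖ ≤ ‖1 - x * conj y‖ := norm_sub_le_norm_one_sub_mul_conj hx hy
  calc (1 - ‖y‖ ^ 2) * ‖1 - x * conj z‖
      = ‖(1 - x * conj y) * (1 - y * conj z) - (x - y) * (conj z - conj y)‖ := by
        rw [← hyy, ← norm_mul]; congr 1; ring
    _ ≤ ‖1 - x * conj y‖ * ‖1 - z * conj y‖ + ‖x - y‖ * ‖z - y‖ := by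
        refine (norm_sub_le _ _).trans_eq ?_
        rw [norm_mul, norm_mul, norm_one_sub_mul_conj_comm y, ← map_sub, Complex.norm_conj]
    _ ≤ ‖1 - x * conj y‖ * (‖1 - z * conj y‖ + ‖z - y‖) := by
        nlinarith [mul_le_mul_of_nonneg_right hxy (norm_nonneg (z - y))]

theorem one_sub_norm_Tmap_mul_le {x y z : ℂ} (hx : ‖x‖ ≤ 1) (hy : ‖y‖ < 1) (hz : ‖z‖ ≤ 1) :
    (1 - ‖Tmap y z‖) * ‖1 - x * conj z‖ ≤ 2 * ‖1 - x * conj y‖ := by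
  have hD : 0 < ‖1 - z * conj y‖ := by
    rw [norm_one_sub_mul_conj_comm]; exact norm_one_sub_mul_conj_pos hy hz
  set A := ‖1 - x * conj z‖
  set B := ‖1 - x * conj y‖
  set D := ‖1 - z * conj y‖
  set E := ‖z - y‖
  have hED : 0 ≤ D - E := sub_nonneg.2 (norm_sub_le_norm_one_sub_mul_conj hz hy.le)
  have hy2 : 0 < 1 - ‖y‖ ^ 2 := by nlinarith [norm_nonneg y]
  have hDE : (D - E) * (D + E) = (1 - ‖y‖ ^ 2) * (1 - ‖z‖ ^ 2) := by
    linear_combination norm_one_sub_mul_conj_sq z y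
  have hzD : 1 - ‖z‖ ≤ D := by
    nlinarith [one_sub_norm_mul_norm_le z y, norm_nonneg z, norm_nonneg y]
  have hA : (D - E) * A ≤ B * (1 - ‖z‖ ^ 2) := by
    refine le_of_mul_le_mul_left ?_ hy2
    calc (1 - ‖y‖ ^ 2) * ((D - E) * A) = (D - E) * ((1 - ‖y‖ ^ 2) * A) := by ring
      _ ≤ (D - E) * (B * (D + E)) :=
        mul_le_mul_of_nonneg_left (one_sub_norm_sq_mul_norm_one_sub_mul_conj_le hx hy.le z) hED
      _ = (1 - ‖y‖ ^ 2) * (B * (1 - ‖z‖ ^ 2)) := by linear_combination B * hDE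
  rw [norm_Tmap, one_sub_div hD.ne', div_mul_eq_mul_div, div_le_iff₀ hD]
  calc (D - E) * A ≤ B * ((1 - ‖z‖) * (1 + ‖z‖)) := by linear_combination hA
    _ ≤ B * (D * 2) := by gcongr; linarith
    _ = 2 * B * D := by ring

theorem log_norm_one_sub_mul_conj_sub_le {x y z : ℂ} (hx : ‖x‖ < 1) (hy : ‖y‖ < 1)
    (hz : ‖z‖ < 1) :
    Real.log ‖1 - x * conj z‖ - Real.log ‖1 - x * conj y‖ ≤ dH y z + Real.log 2 := by
  set t := ‖Tmap y z‖
  have ht0 : 0 ≤ t := norm_nonneg _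
  have ht1 : 0 < 1 - t := sub_pos.2 (norm_Tmap_lt_one hy hz)
  have hA := norm_one_sub_mul_conj_pos hx hz.le
  have hB := norm_one_sub_mul_conj_pos hx hy.le
  have hkey := Real.log_le_log (by positivity) (one_sub_norm_Tmap_mul_le hx.le hy hz.le)
  rw [Real.log_mul ht1.ne' hA.ne', Real.log_mul two_ne_zero hB.ne'] at hkey
  have hdH : dH y z = Real.log (1 + t) - Real.log (1 - t) :=
    Real.log_div (by linarith) ht1.ne'
  linarith [Real.log_nonneg (by linarith : 1 ≤ 1 + t)]

theorem abs_log_norm_one_sub_mul_conj_sub_le {x y z : ℂ} (hx : ‖x‖ < 1) (hy : ‖y‖ < 1)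
    (hz : ‖z‖ < 1) :
    |Real.log ‖1 - x * conj z‖ - Real.log ‖1 - x * conj y‖| ≤ dH y z + Real.log 2 := by
  refine abs_sub_le_iff.2 ⟨log_norm_one_sub_mul_conj_sub_le hx hy hz, ?_⟩
  rw [← dH_comm]
  exact log_norm_one_sub_mul_conj_sub_le hx hz hy

/-- There is an absolute constant `C > 0` so that for any `x, y, z ∈ 𝔻`,
`|𝔼[𝐆(x)(𝐆(y) − 𝐆(z))]| ≤ d_H(y,z)/2 + C`; equivalently,
`|log(|1 − x z̄| / |1 − x ȳ|)| ≤ d_H(y,z) + 2C`. -/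
theorem stmt_7 :
    ∃ C > (0 : ℝ), ∀ x y z : ℂ,
      ‖x‖ < 1 → ‖y‖ < 1 → ‖z‖ < 1 →
      |Gcov x y - Gcov x z| ≤ dH y z / 2 + C ∧
      |Real.log (‖1 - x * (starRingEnd ℂ) z‖
          / ‖1 - x * (starRingEnd ℂ) y‖)| ≤ dH y z + 2 * C := by
  refine ⟨Real.log 2 / 2, by positivity, fun x y z hx hy hz => ?_⟩
  have hbound := abs_log_norm_one_sub_mul_conj_sub_le hx hy hz
  constructor
  · have hG : Gcov x y - Gcov x z =
        (Real.log ‖1 - x * conj z‖ - Real.log ‖1 - x * conj y‖) / 2 := by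
      rw [Gcov, Gcov]; ring
    rw [hG, abs_div, abs_two]
    linarith
  · rw [Real.log_div (norm_one_sub_mul_conj_pos hx hz.le).ne'
      (norm_one_sub_mul_conj_pos hx hy.le).ne']
    linarith

end
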